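/- arXiv:2506.19793 — 2 statements merged into one kernel-verified Lean document; each statement's English description precedes it below -/
import Mathlib

section
/- For all real numbers f, g and every real exponent α > 1, the inequality |f - g|^{α-2} (f - g) (f₊ - g₊) ≥ |f₊ - g₊|^α holds, where f₊ = max{f, 0} and g₊ = max{g, 0}. -/
/-- For all real f, g and every real exponent α > 1,
|f - g|^{α-2} (f - g) (f₊ - g₊) ≥ |f₊ - g₊|^α, where f₊ = max f 0. -/
theorem stmt_0 (f g α : ℝ) (hα : 1 < α) :
    |max f 0 - max g 0| ^ α ≤ |f - g| ^ (α - 2) * (f - g) * (max f 0 - max g 0) := by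
  rcases eq_or_ne f g with h | h
  · subst h; simp [Real.zero_rpow (by linarith : α ≠ 0)]
  have key : (f - g) * (max f 0 - max g 0) = |f - g| * |max f 0 - max g 0| := by
    rcases le_total g f with hle | hle
    · rw [abs_of_nonneg (by linarith : (0:ℝ) ≤ f - g),
        abs_of_nonneg (sub_nonneg.mpr (max_le_max hle le_rfl))]
    · rw [abs_of_nonpos (by linarith : f - g ≤ 0),
        abs_of_nonpos (sub_nonpos.mpr (max_le_max hle le_rfl))]
      ring
  have ha : 0 < |f - g| := abs_pos.mpr (sub_ne_zero.mpr h)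
  have hb : |max f 0 - max g 0| ≤ |f - g| := abs_max_sub_max_le_abs f g 0
  have hb0 : 0 ≤ |max f 0 - max g 0| := abs_nonneg _
  rw [mul_assoc, key, ← mul_assoc]
  have h1 : |f - g| ^ (α - 2) * |f - g| = |f - g| ^ (α - 1) := by
    rw [← Real.rpow_add_one (ne_of_gt ha) (α - 2)]
    congr 1; ring
  rw [h1]
  rcases eq_or_lt_of_le hb0 with hb0' | hb0'
  · rw [← hb0', Real.zero_rpow (by linarith : α ≠ 0), mul_zero]
  · calc |max f 0 - max g 0| ^ α
        = |max f 0 - max g 0| ^ (α - 1) * |max f 0 - max g 0| := by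
          rw [← Real.rpow_add_one (ne_of_gt hb0') (α - 1)]; congr 1; ring
      _ ≤ |f - g| ^ (α - 1) * |max f 0 - max g 0| := by
          exact mul_le_mul_of_nonneg_right
            (Real.rpow_le_rpow hb0 hb (by linarith)) hb0
end

section
/- Let 0 < γ < 1, 1 < p < r, and A, B, C > 0. Define φ(t) = (A/p) t^p - (λ C/(1-γ)) t^{1-γ} - (B/r) t^r for t > 0. Then there exists λ* > 0 such that for all 0 < λ < λ*, the equation φ'(t) = 0 has exactly two solutions 0 < t⁺ < t⁻, with φ''(t⁺) > 0 and φ''(t⁻) < 0. -/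
/-!
On `t > 0` the derivative factors as `φ'(t) = t^(-γ) (g(t) - λC)` with
`g(t) = A t^(p-1+γ) - B t^(r-1+γ)`. Since `0 < p - 1 + γ < r - 1 + γ`, `g` vanishes at `0`,
increases strictly up to a positive maximum at an explicit point `t₀`, and then decreases
strictly through zero. Hence for `0 < λC < g(t₀)` the level `λC` is taken exactly twice, once on
each side of `t₀`, and at such a root `φ''(t) = t^(-γ) g'(t)` has the sign of `g'`.
-/

open Real Set Filter Topology

lemma sub_mul_rpow_pos_iff {c D d t : ℝ} (hc : 0 ≤ c) (hD : 0 < D) (hd : 0 < d) (ht : 0 ≤ t) :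
    0 < c - D * t ^ d ↔ t < (c / D) ^ d⁻¹ := by
  rw [lt_rpow_inv_iff_of_pos ht (div_nonneg hc hD.le) hd, lt_div_iff₀ hD, sub_pos, mul_comm]

lemma sub_mul_rpow_neg_iff {c D d t : ℝ} (hc : 0 ≤ c) (hD : 0 < D) (hd : 0 < d) (ht : 0 ≤ t) :
    c - D * t ^ d < 0 ↔ (c / D) ^ d⁻¹ < t := by
  rw [rpow_inv_lt_iff_of_pos (div_nonneg hc hD.le) ht hd, div_lt_iff₀ hD, sub_neg, mul_comm]

lemma exists_two_roots_of_strictMonoOn_strictAntiOn {f : ℝ → ℝ} {x m z c : ℝ}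
    (hf : ContinuousOn f (Icc x z)) (hmono : StrictMonoOn f (Icc x m))
    (hanti : StrictAntiOn f (Ici m)) (hxm : x ≤ m) (hmz : m ≤ z)
    (hx : f x < c) (hm : c < f m) (hz : f z < c) :
    ∃ t₁ ∈ Ioo x m, ∃ t₂ ∈ Ioo m z, f t₁ = c ∧ f t₂ = c ∧
      ∀ t, x ≤ t → f t = c → t = t₁ ∨ t = t₂ := by
  obtain ⟨t₁, ht₁, hft₁⟩ :=
    intermediate_value_Ioo hxm (hf.mono (Icc_subset_Icc_right hmz)) ⟨hx, hm⟩
  obtain ⟨t₂, ht₂, hft₂⟩ :=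
    intermediate_value_Ioo' hmz (hf.mono (Icc_subset_Icc_left hxm)) ⟨hz, hm⟩
  refine ⟨t₁, ht₁, t₂, ht₂, hft₁, hft₂, fun t hxt hft => ?_⟩
  rcases le_total t m with htm | hmt
  · exact .inl (hmono.injOn ⟨hxt, htm⟩ (Ioo_subset_Icc_self ht₁) (hft.trans hft₁.symm))
  · exact .inr (hanti.injOn hmt (le_of_lt ht₂.1) (hft.trans hft₂.symm))

lemma deriv_deriv_eq_of_hasDerivAt_mul_sub {φ w g : ℝ → ℝ} {c t : ℝ}
    (hφ : ∀ᶠ s in 𝓝 t, HasDerivAt φ (w s * (g s - c)) s) (hw : DifferentiableAt ℝ w t)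
    (hg : DifferentiableAt ℝ g t) (hroot : g t = c) :
    deriv (deriv φ) t = w t * deriv g t := by
  have hderiv : deriv φ =ᶠ[𝓝 t] fun s => w s * (g s - c) := hφ.mono fun s hs => hs.deriv
  rw [hderiv.deriv_eq, deriv_fun_mul hw (hg.sub_const c), deriv_sub_const, hroot]
  ring

noncomputable def hump (A B a b t : ℝ) : ℝ := A * t ^ a - B * t ^ b

noncomputable def humpPeak (A B a b : ℝ) : ℝ := (A * a / (B * b)) ^ (b - a)⁻¹

section Hump

variable {A B a b : ℝ}

lemma hump_zero (ha : 0 < a) (hb : 0 < b) : hump A B a b 0 = 0 := by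
  simp [hump, zero_rpow ha.ne', zero_rpow hb.ne']

lemma hump_eq_rpow_mul {t : ℝ} (ht : 0 < t) : hump A B a b t = t ^ a * (A - B * t ^ (b - a)) := by
  rw [hump, mul_sub, ← mul_assoc, mul_comm (t ^ a) B, mul_assoc, ← rpow_add ht, add_sub_cancel]
  ring

lemma hump_rpow_inv_eq_zero (hA : 0 < A) (hB : 0 < B) (hab : a < b) :
    hump A B a b ((A / B) ^ (b - a)⁻¹) = 0 := by
  rw [hump_eq_rpow_mul (by positivity), rpow_inv_rpow (by positivity) (sub_pos.2 hab).ne',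
    mul_div_cancel₀ _ hB.ne', sub_self, mul_zero]

lemma hasDerivAt_hump {t : ℝ} (ht : 0 < t) :
    HasDerivAt (hump A B a b) (t ^ (a - 1) * (A * a - B * b * t ^ (b - a))) t := by
  refine (((hasDerivAt_rpow_const (p := a) (.inl ht.ne')).const_mul A).sub
    ((hasDerivAt_rpow_const (p := b) (.inl ht.ne')).const_mul B)).congr_deriv ?_
  rw [show b - 1 = (a - 1) + (b - a) by ring, rpow_add ht]
  ring

lemma humpPeak_pos (hA : 0 < A) (hB : 0 < B) (ha : 0 < a) (hab : a < b) :
    0 < humpPeak A B a b := by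
  have hb := ha.trans hab
  unfold humpPeak
  positivity

lemma deriv_hump_pos (hA : 0 < A) (hB : 0 < B) (ha : 0 < a) (hab : a < b) {t : ℝ} (ht : 0 < t)
    (htp : t < humpPeak A B a b) : 0 < deriv (hump A B a b) t := by
  rw [(hasDerivAt_hump ht).deriv]
  have := (sub_mul_rpow_pos_iff (by positivity) (by nlinarith) (sub_pos.2 hab) ht.le).2 htp
  positivity

lemma deriv_hump_neg (hA : 0 < A) (hB : 0 < B) (ha : 0 < a) (hab : a < b) {t : ℝ}
    (htp : humpPeak A B a b < t) : deriv (hump A B a b) t < 0 := by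
  have ht : 0 < t := (humpPeak_pos hA hB ha hab).trans htp
  rw [(hasDerivAt_hump ht).deriv]
  exact mul_neg_of_pos_of_neg (by positivity)
    ((sub_mul_rpow_neg_iff (by positivity) (by nlinarith) (sub_pos.2 hab) ht.le).2 htp)

lemma continuous_hump (ha : 0 ≤ a) (hb : 0 ≤ b) : Continuous (hump A B a b) :=
  (continuous_const.mul (continuous_rpow_const ha)).sub
    (continuous_const.mul (continuous_rpow_const hb))

lemma strictMonoOn_hump (hA : 0 < A) (hB : 0 < B) (ha : 0 < a) (hab : a < b) :
    StrictMonoOn (hump A B a b) (Icc 0 (humpPeak A B a b)) := by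
  refine strictMonoOn_of_deriv_pos (convex_Icc _ _)
    (continuous_hump ha.le (ha.trans hab).le).continuousOn fun t ht => ?_
  rw [interior_Icc] at ht
  exact deriv_hump_pos hA hB ha hab ht.1 ht.2

lemma strictAntiOn_hump (hA : 0 < A) (hB : 0 < B) (ha : 0 < a) (hab : a < b) :
    StrictAntiOn (hump A B a b) (Ici (humpPeak A B a b)) := by
  refine strictAntiOn_of_deriv_neg (convex_Ici _)
    (continuous_hump ha.le (ha.trans hab).le).continuousOn fun t ht => ?_
  rw [interior_Ici] at ht
  exact deriv_hump_neg hA hB ha hab ht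

lemma humpPeak_lt_rpow_inv (hA : 0 < A) (hB : 0 < B) (ha : 0 < a) (hab : a < b) :
    humpPeak A B a b < (A / B) ^ (b - a)⁻¹ := by
  have hb := ha.trans hab
  refine rpow_lt_rpow (by positivity) ?_ (inv_pos.2 (sub_pos.2 hab))
  rw [mul_div_mul_comm]
  exact mul_lt_of_lt_one_right (by positivity) ((div_lt_one hb).2 hab)

lemma hump_pos (hA : 0 < A) (hB : 0 < B) (hab : a < b) {t : ℝ} (ht : 0 < t)
    (hts : t < (A / B) ^ (b - a)⁻¹) : 0 < hump A B a b t := by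
  rw [hump_eq_rpow_mul ht]
  have := (sub_mul_rpow_pos_iff hA.le hB (sub_pos.2 hab) ht.le).2 hts
  positivity

lemma hump_humpPeak_pos (hA : 0 < A) (hB : 0 < B) (ha : 0 < a) (hab : a < b) :
    0 < hump A B a b (humpPeak A B a b) :=
  hump_pos hA hB hab (humpPeak_pos hA hB ha hab) (humpPeak_lt_rpow_inv hA hB ha hab)

lemma exists_two_roots_hump (hA : 0 < A) (hB : 0 < B) (ha : 0 < a) (hab : a < b) {c : ℝ}
    (hc : 0 < c) (hcM : c < hump A B a b (humpPeak A B a b)) :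
    ∃ t₁ ∈ Ioo 0 (humpPeak A B a b), ∃ t₂ ∈ Ioi (humpPeak A B a b),
      hump A B a b t₁ = c ∧ hump A B a b t₂ = c ∧
      ∀ t, 0 ≤ t → hump A B a b t = c → t = t₁ ∨ t = t₂ := by
  have hlt := humpPeak_lt_rpow_inv hA hB ha hab
  obtain ⟨t₁, ht₁, t₂, ht₂, h⟩ := exists_two_roots_of_strictMonoOn_strictAntiOn
    (continuous_hump ha.le (ha.trans hab).le).continuousOn (strictMonoOn_hump hA hB ha hab)
    (strictAntiOn_hump hA hB ha hab) (humpPeak_pos hA hB ha hab).le hlt.le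
    (by rwa [hump_zero ha (ha.trans hab)]) hcM
    (by rwa [hump_rpow_inv_eq_zero hA hB hab])
  exact ⟨t₁, ht₁, t₂, ht₂.1, h⟩

end Hump

lemma hasDerivAt_fibering {γ p r A B C lam t : ℝ} (hγ : γ ≠ 1) (hp : p ≠ 0) (hr : r ≠ 0)
    (ht : 0 < t) :
    HasDerivAt (fun t => (A / p) * t ^ p - (lam * C / (1 - γ)) * t ^ (1 - γ) - (B / r) * t ^ r)
      (t ^ (-γ) * (hump A B (p - 1 + γ) (r - 1 + γ) t - lam * C)) t := by
  refine ((((hasDerivAt_rpow_const (p := p) (.inl ht.ne')).const_mul (A / p)).sub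
    ((hasDerivAt_rpow_const (p := 1 - γ) (.inl ht.ne')).const_mul (lam * C / (1 - γ)))).sub
    ((hasDerivAt_rpow_const (p := r) (.inl ht.ne')).const_mul (B / r))).congr_deriv ?_
  have hγ' : 1 - γ ≠ 0 := sub_ne_zero.2 hγ.symm
  have hpow (q : ℝ) : t ^ (-γ) * t ^ (q - 1 + γ) = t ^ (q - 1) := by
    rw [← rpow_add ht]
    ring_nf
  rw [hump, show 1 - γ - 1 = -γ by ring, ← hpow p, ← hpow r]
  field_simp
  ring

/-- Fibering map dichotomy, constant-exponent case: for small λ > 0 the map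
φ(t) = (A/p) t^p - (λC/(1-γ)) t^{1-γ} - (B/r) t^r has exactly two positive
critical points t⁺ < t⁻, with φ''(t⁺) > 0 and φ''(t⁻) < 0. -/
theorem stmt_5 (γ p r A B C : ℝ) (hγ0 : 0 < γ) (hγ1 : γ < 1)
    (hp : 1 < p) (hpr : p < r) (hA : 0 < A) (hB : 0 < B) (hC : 0 < C) :
    ∃ lamStar > (0 : ℝ), ∀ lam : ℝ, 0 < lam → lam < lamStar →
      ∃ tp tm : ℝ, 0 < tp ∧ tp < tm ∧
        (let φ : ℝ → ℝ :=
          fun t => (A / p) * t ^ p - (lam * C / (1 - γ)) * t ^ (1 - γ) - (B / r) * t ^ r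
         deriv φ tp = 0 ∧ deriv φ tm = 0 ∧
         (∀ t : ℝ, 0 < t → deriv φ t = 0 → t = tp ∨ t = tm) ∧
         0 < deriv (deriv φ) tp ∧ deriv (deriv φ) tm < 0) := by
  set a := p - 1 + γ
  set b := r - 1 + γ
  have ha : 0 < a := by linarith
  have hab : a < b := by linarith
  refine ⟨hump A B a b (humpPeak A B a b) / C, div_pos (hump_humpPeak_pos hA hB ha hab) hC,
    fun lam hlam hlamStar => ?_⟩
  obtain ⟨tp, htp, tm, htm, hgp, hgm, huniq⟩ :=
    exists_two_roots_hump hA hB ha hab (mul_pos hlam hC) ((lt_div_iff₀ hC).1 hlamStar)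
  have htm0 : 0 < tm := (humpPeak_pos hA hB ha hab).trans htm
  refine ⟨tp, tm, htp.1, htp.2.trans htm, ?_⟩
  intro φ
  have hφ (t : ℝ) (ht : 0 < t) : HasDerivAt φ (t ^ (-γ) * (hump A B a b t - lam * C)) t :=
    hasDerivAt_fibering hγ1.ne (by linarith) (by linarith) ht
  have hφ'' (t : ℝ) (ht : 0 < t) (hroot : hump A B a b t = lam * C) :
      deriv (deriv φ) t = t ^ (-γ) * deriv (hump A B a b) t :=
    deriv_deriv_eq_of_hasDerivAt_mul_sub (eventually_of_mem (Ioi_mem_nhds ht) hφ)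
      (differentiableAt_id.rpow_const (.inl ht.ne')) (hasDerivAt_hump ht).differentiableAt hroot
  refine ⟨?_, ?_, fun t ht hφt => ?_, ?_, ?_⟩
  · rw [(hφ tp htp.1).deriv, hgp, sub_self, mul_zero]
  · rw [(hφ tm htm0).deriv, hgm, sub_self, mul_zero]
  · rw [(hφ t ht).deriv, mul_eq_zero, sub_eq_zero] at hφt
    exact huniq t ht.le (hφt.resolve_left (rpow_pos_of_pos ht _).ne')
  · rw [hφ'' tp htp.1 hgp]
    exact mul_pos (rpow_pos_of_pos htp.1 _) (deriv_hump_pos hA hB ha hab htp.1 htp.2)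
  · rw [hφ'' tm htm0 hgm]
    exact mul_neg_of_pos_of_neg (rpow_pos_of_pos htm0 _) (deriv_hump_neg hA hB ha hab htm)
end
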